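/- Let G be a graph and e = ⟨v,w⟩ an edge of G such that there is no graph homomorphism L_3 → G ∖ e sending 0 to v and 3 to w. Then for any (σ, τ) ∈ B(G) with neither v nor w in σ, the fiber r_{e*}^{-1}(σ, τ) equals {(σ, τ)}. -/

import Mathlib

/-- A graph: a symmetric relation on a vertex type (loops allowed). -/
structure Graph' (V : Type*) where
  adj : V → V → Prop
  symm : ∀ {x y : V}, adj x y → adj y x

variable {V : Type*}

/-- `f` is a graph homomorphism from `G` to `H`. -/
def IsGraphHom {W : Type*} (G : Graph' V) (H : Graph' W) (f : V → W) : Prop :=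
  ∀ {x y : V}, G.adj x y → H.adj (f x) (f y)

/-- The path graph `L₃` on vertices `0,1,2,3`. -/
def L3 : Graph' (Fin 4) where
  adj i j := (i : ℕ) + 1 = j ∨ (j : ℕ) + 1 = i
  symm h := h.symm

/-- The graph `G ∖ e` obtained from `G` by deleting the edge `e = ⟨v,w⟩`. -/
def delEdge (G : Graph' V) (v w : V) : Graph' V where
  adj x y := G.adj x y ∧ ¬ ((x = v ∧ y = w) ∨ (x = w ∧ y = v))
  symm h := ⟨G.symm h.1, fun hc => h.2 (by tauto)⟩

/-- The subdivision `G_e` of `G` at `e = ⟨v,w⟩`: delete `e`, add new vertices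
`0 = Sum.inr false` and `1 = Sum.inr true` with edges `⟨0,1⟩, ⟨0,v⟩, ⟨1,w⟩`. -/
def subdiv (G : Graph' V) (v w : V) : Graph' (V ⊕ Bool) where
  adj a b :=
    match a, b with
    | .inl x, .inl y => G.adj x y ∧ ¬ ((x = v ∧ y = w) ∨ (x = w ∧ y = v))
    | .inl x, .inr c => (c = false ∧ x = v) ∨ (c = true ∧ x = w)
    | .inr c, .inl x => (c = false ∧ x = v) ∨ (c = true ∧ x = w)
    | .inr c, .inr d => c ≠ d
  symm := by
    rintro (x | c) (y | d) h
    · exact ⟨G.symm h.1, fun hc => h.2 (by tauto)⟩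
    · exact h
    · exact h
    · exact h.symm

/-- The natural map `r_e : G_e → G`: identity on `V(G)`, `0 ↦ w`, `1 ↦ v`. -/
def retr (v w : V) : V ⊕ Bool → V :=
  Sum.elim id (fun c => if c then v else w)

/-- `p = (σ,τ)` is an element of the box complex `B(H) = Hom(K₂,H)`. -/
def IsBoxPair {W : Type*} (H : Graph' W) (p : Set W × Set W) : Prop :=
  p.1.Nonempty ∧ p.2.Nonempty ∧ ∀ a ∈ p.1, ∀ b ∈ p.2, H.adj a b

/-!
The new vertices `0, 1` of `G_e` are sent by `r_e` to `w` and `v`, so a preimage of `(σ, τ)`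
has no new vertex on its `σ`-side when `v, w ∉ σ`. Nor on its `τ`-side: a new vertex is adjacent
only to `v`, `w` and the other new vertex, while the `σ`-side is a nonempty set of old vertices
other than `v`, `w`. A pair of sets of old vertices is determined by its image under `r_e`.
-/

variable {G : Graph' V} {v w : V}

lemma image_retr_image_inl (v w : V) (s : Set V) : retr v w '' (Sum.inl '' s) = s := by
  simp [Set.image_image, retr]

lemma image_inl_image_retr {s : Set (V ⊕ Bool)} (hs : ∀ c, Sum.inr c ∉ s) :
    Sum.inl '' (retr v w '' s) = s := by
  ext x
  constructor
  · rintro ⟨_, ⟨a | c, hx, rfl⟩, rfl⟩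
    · exact hx
    · exact absurd hx (hs c)
  · intro hx
    cases x with
    | inl a => exact ⟨a, ⟨_, hx, rfl⟩, rfl⟩
    | inr c => exact absurd hx (hs c)

lemma inr_notMem_of_notMem_image_retr {s : Set (V ⊕ Bool)} (hv : v ∉ retr v w '' s)
    (hw : w ∉ retr v w '' s) (c : Bool) : Sum.inr c ∉ s := by
  intro hc
  cases c
  · exact hw ⟨_, hc, rfl⟩
  · exact hv ⟨_, hc, rfl⟩

lemma subdiv_adj_inl_inr {a : V} {c : Bool} (h : (subdiv G v w).adj (Sum.inl a) (Sum.inr c)) :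
    a = v ∨ a = w := by
  rcases h with ⟨_, rfl⟩ | ⟨_, rfl⟩ <;> simp

lemma subdiv_adj_inl_inl_of_ne {a b : V} (hab : G.adj a b) (hav : a ≠ v) (haw : a ≠ w) :
    (subdiv G v w).adj (Sum.inl a) (Sum.inl b) :=
  ⟨hab, by rintro (⟨rfl, -⟩ | ⟨rfl, -⟩) <;> simp_all⟩

lemma isBoxPair_subdiv_image_inl {σ τ : Set V} (hbox : IsBoxPair G (σ, τ)) (hv : v ∉ σ)
    (hw : w ∉ σ) : IsBoxPair (subdiv G v w) (Sum.inl '' σ, Sum.inl '' τ) := by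
  obtain ⟨hσ, hτ, hadj⟩ := hbox
  refine ⟨hσ.image _, hτ.image _, ?_⟩
  rintro _ ⟨a, ha, rfl⟩ _ ⟨b, hb, rfl⟩
  exact subdiv_adj_inl_inl_of_ne (hadj a ha b hb) (ne_of_mem_of_not_mem ha hv)
    (ne_of_mem_of_not_mem ha hw)

lemma eq_image_inl_of_image_retr_eq {σ τ : Set V} {p : Set (V ⊕ Bool) × Set (V ⊕ Bool)}
    (hp : IsBoxPair (subdiv G v w) p) (h₁ : retr v w '' p.1 = σ) (h₂ : retr v w '' p.2 = τ)
    (hv : v ∉ σ) (hw : w ∉ σ) : p = (Sum.inl '' σ, Sum.inl '' τ) := by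
  obtain ⟨⟨x, hx⟩, -, hadj⟩ := hp
  subst h₁ h₂
  have hinr₁ := inr_notMem_of_notMem_image_retr hv hw
  have hinr₂ : ∀ c, Sum.inr c ∉ p.2 := by
    obtain ⟨a, rfl⟩ : ∃ a, x = Sum.inl a := by
      cases x with
      | inl a => exact ⟨a, rfl⟩
      | inr c => exact absurd hx (hinr₁ c)
    intro c hc
    rcases subdiv_adj_inl_inr (hadj _ hx _ hc) with rfl | rfl
    · exact hv ⟨_, hx, rfl⟩
    · exact hw ⟨_, hx, rfl⟩
  rw [image_inl_image_retr hinr₁, image_inl_image_retr hinr₂]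

theorem stmt_6_general (G : Graph' V) (v w : V)
    (σ τ : Set V) (hbox : IsBoxPair G (σ, τ)) (hv : v ∉ σ) (hw : w ∉ σ) :
    IsBoxPair (subdiv G v w) (Sum.inl '' σ, Sum.inl '' τ) ∧
    ∀ p : Set (V ⊕ Bool) × Set (V ⊕ Bool),
      IsBoxPair (subdiv G v w) p →
      (retr v w '' p.1 = σ ∧ retr v w '' p.2 = τ ↔
        p = (Sum.inl '' σ, Sum.inl '' τ)) := by
  refine ⟨isBoxPair_subdiv_image_inl hbox hv hw, fun p hp => ⟨?_, ?_⟩⟩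
  · rintro ⟨h₁, h₂⟩
    exact eq_image_inl_of_image_retr_eq hp h₁ h₂ hv hw
  · rintro rfl
    exact ⟨image_retr_image_inl v w σ, image_retr_image_inl v w τ⟩

/-- If there is no homomorphism `L₃ → G ∖ e` with `0 ↦ v`, `3 ↦ w`, then for
any `(σ,τ) ∈ B(G)` with `v ∉ σ` and `w ∉ σ`, the fiber `r_{e∗}^{-1}(σ,τ)`
equals the singleton `{(σ,τ)}` (where `(σ,τ)` is regarded inside `B(G_e)`
via `Sum.inl`). -/
theorem stmt_6 (G : Graph' V) (v w : V) (he : G.adj v w) (hne : v ≠ w)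
    (hL : ¬ ∃ f : Fin 4 → V, IsGraphHom L3 (delEdge G v w) f ∧ f 0 = v ∧ f 3 = w)
    (σ τ : Set V) (hbox : IsBoxPair G (σ, τ)) (hv : v ∉ σ) (hw : w ∉ σ) :
    IsBoxPair (subdiv G v w) (Sum.inl '' σ, Sum.inl '' τ) ∧
    ∀ p : Set (V ⊕ Bool) × Set (V ⊕ Bool),
      IsBoxPair (subdiv G v w) p →
      (retr v w '' p.1 = σ ∧ retr v w '' p.2 = τ ↔
        p = (Sum.inl '' σ, Sum.inl '' τ)) :=
  stmt_6_general G v w σ τ hbox hv hw
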